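/- arXiv:2506.07806 — 3 statements merged into one kernel-verified Lean document; each statement's English description precedes it below -/
import Mathlib

section
/- (The aggregate posterior is the optimal prior.) Let M be a positive integer, let q_1, …, q_M be probability measures on a measurable space Ω, and let q̄ = (1/M) ∑_i q_i be their uniform average, which is a probability measure. Suppose p is a probability measure on Ω with q_i absolutely continuous with respect to p and KL(q_i‖p) finite for every i. Then each q_i is absolutely continuous with respect to q̄, and the decomposition ∑_{i=1}^M KL(q_i‖p) = ∑_{i=1}^M KL(q_i‖q̄) + M · KL(q̄‖p) holds. In particular ∑_{i=1}^M KL(q_i‖q̄) ≤ ∑_{i=1}^M KL(q_i‖p), i.e. the aggregate q̄ minimizes the total KL divergence from the q_i among all priors p. -/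
open MeasureTheory
open scoped Classical NNReal
open scoped ENNReal

/-- Kullback–Leibler divergence of `q` from `ν`: `∫ log (dq/dν) dq` when `q ≪ ν` and the
integrand is integrable, and `+∞` otherwise. -/
noncomputable def klDiv {Ω : Type*} [MeasurableSpace Ω] (q ν : Measure Ω) : EReal :=
  if q ≪ ν ∧ Integrable (fun ω => Real.log (q.rnDeriv ν ω).toReal) q
  then ((∫ ω, Real.log (q.rnDeriv ν ω).toReal ∂q : ℝ) : EReal)
  else ⊤

lemma klDiv_eq_llr {Ω : Type*} [MeasurableSpace Ω] (q ν : Measure Ω) :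
    klDiv q ν = if q ≪ ν ∧ Integrable (llr q ν) q
      then ((∫ ω, llr q ν ω ∂q : ℝ) : EReal) else ⊤ := rfl

/-- The coercion `ℝ → EReal` as an additive monoid hom. -/
noncomputable def realToEReal : ℝ →+ EReal where
  toFun := Real.toEReal
  map_zero' := rfl
  map_add' := EReal.coe_add

lemma EReal.coe_finset_sum {ι : Type*} (s : Finset ι) (f : ι → ℝ) :
    ((∑ i ∈ s, f i : ℝ) : EReal) = ∑ i ∈ s, ((f i : ℝ) : EReal) :=
  map_sum realToEReal f s

/-- Integrability of the inverse of a Radon–Nikodym derivative, with an integral bound. -/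
lemma aux_inv_rnDeriv {Ω : Type*} [MeasurableSpace Ω] (μ ν : Measure Ω)
    [IsFiniteMeasure μ] [IsFiniteMeasure ν] (hμν : μ ≪ ν) :
    Integrable (fun x => ((μ.rnDeriv ν x).toReal)⁻¹) μ ∧
      ∫ x, ((μ.rnDeriv ν x).toReal)⁻¹ ∂μ ≤ (ν Set.univ).toReal := by
  set f := μ.rnDeriv ν with hf
  have hf_meas : Measurable f := Measure.measurable_rnDeriv μ ν
  have hg_meas : Measurable fun x => ENNReal.ofReal ((f x).toReal)⁻¹ :=
    (hf_meas.ennreal_toReal.inv).ennreal_ofReal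
  have key : ∫⁻ x, ENNReal.ofReal ((f x).toReal)⁻¹ ∂μ ≤ ν Set.univ := by
    conv_lhs => rw [← Measure.withDensity_rnDeriv_eq μ ν hμν]
    rw [lintegral_withDensity_eq_lintegral_mul ν hf_meas hg_meas]
    calc ∫⁻ x, (f * fun x => ENNReal.ofReal ((f x).toReal)⁻¹) x ∂ν
        ≤ ∫⁻ _, 1 ∂ν := by
          refine lintegral_mono_ae ?_
          filter_upwards [Measure.rnDeriv_lt_top μ ν] with x hx
          simp only [Pi.mul_apply]
          by_cases h0 : f x = 0
          · simp [h0]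
          · rw [← ENNReal.toReal_inv, ENNReal.ofReal_toReal (by simp [h0]),
              ENNReal.mul_inv_cancel h0 hx.ne]
      _ = ν Set.univ := by simp
  have h_nonneg : 0 ≤ᵐ[μ] fun x => ((f x).toReal)⁻¹ :=
    Filter.Eventually.of_forall fun x => by positivity
  have h_int : Integrable (fun x => ((f x).toReal)⁻¹) μ := by
    refine ⟨(hf_meas.ennreal_toReal.inv).aestronglyMeasurable, ?_⟩
    rw [hasFiniteIntegral_iff_ofReal h_nonneg]
    exact lt_of_le_of_lt key (measure_lt_top ν Set.univ)
  refine ⟨h_int, ?_⟩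
  rw [integral_eq_lintegral_of_nonneg_ae h_nonneg
    (hf_meas.ennreal_toReal.inv).aestronglyMeasurable]
  exact ENNReal.toReal_mono (measure_ne_top ν Set.univ) key

/-- Gibbs' inequality: nonnegativity of the KL integral. -/
lemma aux_gibbs {Ω : Type*} [MeasurableSpace Ω] (μ ν : Measure Ω)
    [IsProbabilityMeasure μ] [IsProbabilityMeasure ν] (hμν : μ ≪ ν)
    (hint : Integrable (llr μ ν) μ) :
    0 ≤ ∫ x, llr μ ν x ∂μ := by
  obtain ⟨h_int_inv, h_le⟩ := aux_inv_rnDeriv μ ν hμν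
  have h_mono : ∫ x, -llr μ ν x ∂μ
      ≤ ∫ x, (((μ.rnDeriv ν x).toReal)⁻¹ - 1) ∂μ := by
    refine integral_mono_ae hint.neg (h_int_inv.sub (integrable_const 1)) ?_
    filter_upwards [Measure.rnDeriv_pos hμν, hμν.ae_le (Measure.rnDeriv_lt_top μ ν)]
      with x hpos hlt
    have ht : 0 < (μ.rnDeriv ν x).toReal := ENNReal.toReal_pos hpos.ne' hlt.ne
    have : Real.log ((μ.rnDeriv ν x).toReal)⁻¹ ≤ ((μ.rnDeriv ν x).toReal)⁻¹ - 1 :=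
      Real.log_le_sub_one_of_pos (by positivity)
    rw [Real.log_inv] at this
    simpa [llr] using this
  have h2 : ∫ x, (((μ.rnDeriv ν x).toReal)⁻¹ - 1) ∂μ ≤ 0 := by
    rw [integral_sub h_int_inv (integrable_const 1)]
    simp only [integral_const, measure_univ, probReal_univ, ENNReal.toReal_one, one_smul, smul_eq_mul]
    have : (ν Set.univ).toReal = 1 := by simp
    linarith [h_le, this]
  rw [integral_neg] at h_mono
  linarith

/-- Integrability of the log-likelihood ratio when the RN derivative is bounded. -/
lemma aux_integrable_llr {Ω : Type*} [MeasurableSpace Ω] (μ ν : Measure Ω)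
    [IsProbabilityMeasure μ] [IsProbabilityMeasure ν] (hμν : μ ≪ ν)
    (C : ℝ) (hC : 1 ≤ C) (hbound : ∀ᵐ x ∂ν, μ.rnDeriv ν x ≤ ENNReal.ofReal C) :
    Integrable (llr μ ν) μ := by
  obtain ⟨h_int_inv, -⟩ := aux_inv_rnDeriv μ ν hμν
  refine Integrable.mono' ((integrable_const (Real.log C)).add h_int_inv)
    (stronglyMeasurable_llr μ ν).aestronglyMeasurable ?_
  filter_upwards [Measure.rnDeriv_pos hμν, hμν.ae_le (Measure.rnDeriv_lt_top μ ν),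
    hμν.ae_le hbound] with x hpos hlt hle
  set t := (μ.rnDeriv ν x).toReal with ht_def
  have ht : 0 < t := ENNReal.toReal_pos hpos.ne' hlt.ne
  have htC : t ≤ C := by
    have := ENNReal.toReal_mono (by simp) hle
    rwa [ENNReal.toReal_ofReal (by linarith)] at this
  have hlogC : 0 ≤ Real.log C := Real.log_nonneg hC
  have h1 : Real.log t ≤ Real.log C := Real.log_le_log ht htC
  have h2 : -Real.log t ≤ t⁻¹ - 1 := by
    have := Real.log_le_sub_one_of_pos (inv_pos.mpr ht)
    rwa [Real.log_inv] at this
  have hinv : 0 ≤ t⁻¹ := by positivity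
  rw [Real.norm_eq_abs, abs_le]
  constructor
  · simp only [Pi.add_apply, llr]
    rw [← ht_def]
    linarith
  · simp only [Pi.add_apply, llr]
    rw [← ht_def]
    linarith

/-- The aggregate posterior is the optimal prior: with `q̄ = (1/M) ∑ i, q i`,
each `q i` is absolutely continuous w.r.t. `q̄`, the total KL divergence decomposes as
`∑ i, KL(q i‖p) = ∑ i, KL(q i‖q̄) + M · KL(q̄‖p)`, and in particular
`∑ i, KL(q i‖q̄) ≤ ∑ i, KL(q i‖p)`. -/
theorem aggregate_posterior_optimal_prior {Ω : Type*} [MeasurableSpace Ω]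
    {M : ℕ} (hM : 0 < M)
    (q : Fin M → Measure Ω) [∀ i, IsProbabilityMeasure (q i)]
    (p : Measure Ω) [IsProbabilityMeasure p]
    (hac : ∀ i, q i ≪ p) (hfin : ∀ i, klDiv (q i) p ≠ ⊤) :
    IsProbabilityMeasure ((M : ℝ≥0)⁻¹ • ∑ i, q i)
    ∧ (∀ i, q i ≪ (M : ℝ≥0)⁻¹ • ∑ i, q i)
    ∧ (∑ i, klDiv (q i) p
        = (∑ i, klDiv (q i) ((M : ℝ≥0)⁻¹ • ∑ i, q i))
          + (M : EReal) * klDiv ((M : ℝ≥0)⁻¹ • ∑ i, q i) p)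
    ∧ (∑ i, klDiv (q i) ((M : ℝ≥0)⁻¹ • ∑ i, q i)) ≤ ∑ i, klDiv (q i) p := by
  have hM0 : (M : ℝ≥0) ≠ 0 := by exact_mod_cast hM.ne'
  have hM0' : (M : ℝ≥0∞) ≠ 0 := by exact_mod_cast hM.ne'
  have hMtop : (M : ℝ≥0∞) ≠ ⊤ := ENNReal.natCast_ne_top M
  set ν : Measure Ω := (M : ℝ≥0)⁻¹ • ∑ i, q i with hνdef
  have hν_apply : ∀ s : Set Ω, ν s = (M : ℝ≥0∞)⁻¹ * ∑ i, q i s := by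
    intro s
    rw [hνdef, Measure.smul_apply, Measure.finset_sum_apply, ENNReal.smul_def,
      smul_eq_mul, ENNReal.coe_inv hM0, ENNReal.coe_natCast]
  have hν_prob : IsProbabilityMeasure ν := by
    constructor
    rw [hν_apply]
    simp [ENNReal.inv_mul_cancel hM0' hMtop]
  haveI := hν_prob
  -- each q i ≪ ν
  have hacν : ∀ i, q i ≪ ν := by
    intro i
    refine Measure.AbsolutelyContinuous.mk fun s _ h0 => ?_
    rw [hν_apply] at h0
    have hsum : ∑ j, q j s = 0 := by
      rcases mul_eq_zero.mp h0 with h | h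
      · exact absurd h (by simp [hM0'])
      · exact h
    have := Finset.sum_eq_zero_iff.mp hsum i (Finset.mem_univ i)
    exact le_antisymm (this ▸ le_refl _) zero_le
  -- ν ≪ p
  have hνp : ν ≪ p := by
    refine Measure.AbsolutelyContinuous.mk fun s _ h0 => ?_
    rw [hν_apply]
    have : ∀ j, q j s = 0 := fun j => hac j h0
    simp [this]
  -- rnDeriv bound
  have hq_le : ∀ i, q i ≤ (M : ℝ≥0∞) • ν := by
    intro i s
    rw [Measure.smul_apply, hν_apply, smul_eq_mul, ← mul_assoc,
      ENNReal.mul_inv_cancel hM0' hMtop, one_mul]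
    exact Finset.single_le_sum (f := fun j => q j s) (fun j _ => zero_le)
      (Finset.mem_univ i)
  have hν_ac_smul : ν ≪ (M : ℝ≥0∞) • ν := by
    refine Measure.AbsolutelyContinuous.mk fun s _ h0 => ?_
    rw [Measure.smul_apply, smul_eq_mul, mul_eq_zero] at h0
    rcases h0 with h | h
    · exact absurd h hM0'
    · exact h
  haveI : IsFiniteMeasure ((M : ℝ≥0∞) • ν) := by
    constructor
    rw [Measure.smul_apply, smul_eq_mul]
    exact ENNReal.mul_lt_top hMtop.lt_top (measure_lt_top ν _)
  have hbound : ∀ i, ∀ᵐ x ∂ν, (q i).rnDeriv ν x ≤ (M : ℝ≥0∞) := by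
    intro i
    have h1 : (q i).rnDeriv ((M : ℝ≥0∞) • ν) ≤ᵐ[(M : ℝ≥0∞) • ν] 1 :=
      Measure.rnDeriv_le_one_of_le (hq_le i)
    have h2 := Measure.rnDeriv_smul_right_of_ne_top (q i) ν hM0' hMtop
    filter_upwards [hν_ac_smul.ae_le h1, h2] with x hx1 hx2
    rw [hx2] at hx1
    simp only [Pi.smul_apply, smul_eq_mul, Pi.one_apply] at hx1
    calc (q i).rnDeriv ν x = (M : ℝ≥0∞) * ((M : ℝ≥0∞)⁻¹ * (q i).rnDeriv ν x) := by
          rw [← mul_assoc, ENNReal.mul_inv_cancel hM0' hMtop, one_mul]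
      _ ≤ (M : ℝ≥0∞) * 1 := by exact mul_le_mul_right hx1 _
      _ = (M : ℝ≥0∞) := mul_one _
  -- integrability of llr (q i) ν
  have hM1 : (1 : ℝ) ≤ (M : ℝ) := by exact_mod_cast hM
  have hint_ν : ∀ i, Integrable (llr (q i) ν) (q i) := by
    intro i
    refine aux_integrable_llr (q i) ν (hacν i) (M : ℝ) hM1 ?_
    filter_upwards [hbound i] with x hx
    rwa [ENNReal.ofReal_natCast]
  -- conditions from hfin
  have hcond : ∀ i, q i ≪ p ∧ Integrable (llr (q i) p) (q i) := by
    intro i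
    by_contra h
    exact hfin i (by rw [klDiv_eq_llr, if_neg h])
  -- chain rule a.e.
  have hchain : ∀ i, ∀ᵐ x ∂(q i), llr (q i) p x = llr (q i) ν x + llr ν p x := by
    intro i
    have hmul := Measure.rnDeriv_mul_rnDeriv (μ := q i) (ν := ν) (κ := p) (hacν i)
    filter_upwards [(hac i).ae_le hmul, Measure.rnDeriv_pos (hacν i),
      (hacν i).ae_le (Measure.rnDeriv_lt_top (q i) ν),
      (hacν i).ae_le (Measure.rnDeriv_pos hνp),
      (hac i).ae_le (Measure.rnDeriv_lt_top ν p)] with x heq hpos1 hlt1 hpos2 hlt2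
    have h1 : ((q i).rnDeriv ν x).toReal ≠ 0 :=
      (ENNReal.toReal_pos hpos1.ne' hlt1.ne).ne'
    have h2 : (ν.rnDeriv p x).toReal ≠ 0 :=
      (ENNReal.toReal_pos hpos2.ne' hlt2.ne).ne'
    rw [llr, llr, llr, ← heq]
    simp only [Pi.mul_apply]
    rw [ENNReal.toReal_mul, Real.log_mul h1 h2]
  -- integrability of llr ν p w.r.t. q i
  have hint_νp : ∀ i, Integrable (llr ν p) (q i) := by
    intro i
    refine Integrable.congr ((hcond i).2.sub (hint_ν i)) ?_
    filter_upwards [hchain i] with x hx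
    simp [hx]
  have h_int_sum : Integrable (llr ν p) (∑ i, q i) :=
    integrable_finset_sum_measure.mpr fun i _ => hint_νp i
  have hint_ν_p : Integrable (llr ν p) ν := by
    rw [hνdef]
    have : ((M : ℝ≥0)⁻¹ : ℝ≥0) • (∑ i, q i)
        = (((M : ℝ≥0)⁻¹ : ℝ≥0) : ℝ≥0∞) • (∑ i, q i) := rfl
    rw [this]
    exact h_int_sum.smul_measure ENNReal.coe_ne_top
  -- real-valued integrals
  set A : Fin M → ℝ := fun i => ∫ x, llr (q i) p x ∂(q i) with hA
  set B : Fin M → ℝ := fun i => ∫ x, llr (q i) ν x ∂(q i) with hB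
  set Cv : ℝ := ∫ x, llr ν p x ∂ν with hCv
  have hsplit : ∀ i, A i = B i + ∫ x, llr ν p x ∂(q i) := by
    intro i
    rw [hA, hB]
    simp only
    rw [integral_congr_ae (hchain i), integral_add (hint_ν i) (hint_νp i)]
  have hsmul_eq : ((M : ℝ≥0)⁻¹ • ∑ i, q i : Measure Ω)
      = ((M : ℝ≥0∞)⁻¹) • ∑ i, q i := by
    ext s hs
    rw [Measure.smul_apply, Measure.smul_apply, ENNReal.smul_def, smul_eq_mul,
      smul_eq_mul, ENNReal.coe_inv hM0, ENNReal.coe_natCast]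
  have hC : (M : ℝ) * Cv = ∑ i, ∫ x, llr ν p x ∂(q i) := by
    have hCv2 : Cv = ∫ x, llr ν p x ∂(((M : ℝ≥0∞)⁻¹) • ∑ i, q i) := by
      rw [hCv]
      congr 1
    rw [hCv2, integral_smul_measure, integral_finset_sum_measure fun i _ => hint_νp i]
    rw [ENNReal.toReal_inv]
    have hMr : ((M : ℝ≥0∞)).toReal = (M : ℝ) := by simp
    rw [smul_eq_mul, ← mul_assoc, hMr,
      mul_inv_cancel₀ (show (M : ℝ) ≠ 0 by exact_mod_cast hM.ne'), one_mul]
  have hgibbs : 0 ≤ Cv := aux_gibbs ν p hνp hint_ν_p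
  -- real equation
  have hreal : ∑ i, A i = ∑ i, B i + (M : ℝ) * Cv := by
    rw [hC, ← Finset.sum_add_distrib]
    exact Finset.sum_congr rfl fun i _ => hsplit i
  -- EReal values of klDiv
  have hkl_p : ∀ i, klDiv (q i) p = ((A i : ℝ) : EReal) := by
    intro i
    rw [klDiv_eq_llr, if_pos (hcond i)]
  have hkl_ν : ∀ i, klDiv (q i) ν = ((B i : ℝ) : EReal) := by
    intro i
    rw [klDiv_eq_llr, if_pos ⟨hacν i, hint_ν i⟩]
  have hkl_νp : klDiv ν p = ((Cv : ℝ) : EReal) := by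
    rw [klDiv_eq_llr, if_pos ⟨hνp, hint_ν_p⟩]
  have hsumA : ∑ i, klDiv (q i) p = ((∑ i, A i : ℝ) : EReal) := by
    rw [EReal.coe_finset_sum]
    exact Finset.sum_congr rfl fun i _ => hkl_p i
  have hsumB : ∑ i, klDiv (q i) ν = ((∑ i, B i : ℝ) : EReal) := by
    rw [EReal.coe_finset_sum]
    exact Finset.sum_congr rfl fun i _ => hkl_ν i
  refine ⟨hν_prob, hacν, ?_, ?_⟩
  · rw [hsumA, hsumB, hkl_νp, ← EReal.coe_coe_eq_natCast, ← EReal.coe_mul, ← EReal.coe_add]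
    exact_mod_cast hreal
  · rw [hsumA, hsumB, EReal.coe_le_coe_iff]
    have : 0 ≤ (M : ℝ) * Cv := mul_nonneg (by positivity) hgibbs
    linarith [hreal]
end

section
/- (Local identifiability of finite Gaussian mixtures: measure equality.) Let d be a positive integer and let μ = ∑_{k ∈ Fin K} π_k • G(m_k, v_k) and μ' = ∑_{k ∈ Fin K'} π'_k • G(m'_k, v'_k) be two finite mixtures of diagonal Gaussians on ℝ^d with weights summing to 1 and all variance entries strictly positive (v_{k,j} > 0 and v'_{k,j} > 0 for all k, j). If there exist x ∈ ℝ^d and δ > 0 such that μ and μ' induce the same measure on the open ball B(x, δ) (i.e. their restrictions to B(x, δ) coincide), then μ = μ' as measures on all of ℝ^d. -/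
open MeasureTheory ProbabilityTheory
open scoped NNReal

/-- The diagonal Gaussian measure on `ℝ^d` with mean vector `m` and variance vector `v`. -/
noncomputable def diagGaussian {d : ℕ} (m : Fin d → ℝ) (v : Fin d → ℝ≥0) :
    Measure (Fin d → ℝ) :=
  Measure.pi fun j => gaussianReal (m j) (v j)

lemma lmarginal_prod_aux {d : ℕ} (μ : Fin d → Measure ℝ) [∀ i, SigmaFinite (μ i)]
    (f : Fin d → ℝ → ENNReal) (hf : ∀ i, Measurable (f i)) (s : Finset (Fin d)) :
    ∀ x, (∫⋯∫⁻_s, (fun y => ∏ i, f i (y i)) ∂μ) x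
      = (∏ i ∈ s, ∫⁻ t, f i t ∂μ i) * ∏ i ∈ sᶜ, f i (x i) := by
  have hF : Measurable fun y : Fin d → ℝ => ∏ i, f i (y i) :=
    Finset.measurable_prod _ fun i _ => (hf i).comp (measurable_pi_apply i)
  induction s using Finset.induction with
  | empty => intro x; simp
  | @insert i s hi ih =>
    intro x
    rw [lmarginal_insert _ hF hi]
    have hstep : ∀ xi : ℝ,
        (∫⋯∫⁻_s, (fun y => ∏ i, f i (y i)) ∂μ) (Function.update x i xi)
          = ((∏ j ∈ s, ∫⁻ t, f j t ∂μ j) * ∏ j ∈ sᶜ.erase i, f j (x j)) * f i xi := by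
      intro xi
      rw [ih]
      have hmem : i ∈ sᶜ := Finset.mem_compl.mpr hi
      rw [← Finset.mul_prod_erase _ _ hmem, Function.update_self]
      have h2 : ∏ j ∈ sᶜ.erase i, f j (Function.update x i xi j)
          = ∏ j ∈ sᶜ.erase i, f j (x j) :=
        Finset.prod_congr rfl fun j hj => by
          rw [Function.update_of_ne (Finset.ne_of_mem_erase hj)]
      rw [h2]; ring
    simp_rw [hstep]
    rw [lintegral_const_mul _ (hf i), Finset.prod_insert hi, Finset.compl_insert]
    ring

lemma lintegral_pi_prod {d : ℕ} (μ : Fin d → Measure ℝ) [∀ i, SigmaFinite (μ i)]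
    (f : Fin d → ℝ → ENNReal) (hf : ∀ i, Measurable (f i)) :
    ∫⁻ y, ∏ i, f i (y i) ∂Measure.pi μ = ∏ i, ∫⁻ t, f i t ∂μ i := by
  rw [lintegral_eq_lmarginal_univ (fun _ => (0 : ℝ)), lmarginal_prod_aux μ f hf]
  simp

lemma pi_withDensity_eq {d : ℕ} (μ : Fin d → Measure ℝ) [∀ i, SigmaFinite (μ i)]
    (f : Fin d → ℝ → ENNReal) (hf : ∀ i, Measurable (f i))
    [∀ i, SigmaFinite ((μ i).withDensity (f i))] :
    Measure.pi (fun i => (μ i).withDensity (f i))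
      = (Measure.pi μ).withDensity fun y => ∏ i, f i (y i) := by
  refine Measure.pi_eq fun s hs => ?_
  rw [withDensity_apply _ (MeasurableSet.univ_pi hs)]
  have hind : ∀ y : Fin d → ℝ,
      (Set.univ.pi s).indicator (fun y => ∏ i, f i (y i)) y
        = ∏ i, (s i).indicator (f i) (y i) := by
    intro y
    by_cases h : y ∈ Set.univ.pi s
    · rw [Set.indicator_of_mem h]
      exact Finset.prod_congr rfl fun i _ =>
        (Set.indicator_of_mem (h i (Set.mem_univ i)) _).symm
    · rw [Set.indicator_of_notMem h]
      rw [Set.mem_univ_pi] at h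
      push_neg at h
      obtain ⟨i, hi⟩ := h
      exact (Finset.prod_eq_zero (Finset.mem_univ i)
        (Set.indicator_of_notMem hi _)).symm
  calc ∫⁻ y in Set.univ.pi s, ∏ i, f i (y i) ∂Measure.pi μ
      = ∫⁻ y, ∏ i, (s i).indicator (f i) (y i) ∂Measure.pi μ := by
        rw [← lintegral_indicator (MeasurableSet.univ_pi hs)]
        exact lintegral_congr hind
    _ = ∏ i, ∫⁻ t, (s i).indicator (f i) t ∂μ i :=
        lintegral_pi_prod μ _ fun i => (hf i).indicator (hs i)
    _ = ∏ i, (μ i).withDensity (f i) (s i) := by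
        refine Finset.prod_congr rfl fun i _ => ?_
        rw [withDensity_apply _ (hs i), ← lintegral_indicator (hs i)]

lemma mixture_withDensity {α : Type*} [MeasurableSpace α] (μ : Measure α) {K : ℕ}
    (c : Fin K → ℝ≥0) (g : Fin K → α → ENNReal) (hg : ∀ k, Measurable (g k)) :
    ∑ k, c k • μ.withDensity (g k)
      = μ.withDensity fun y => ∑ k, (c k : ENNReal) * g k y := by
  ext A hA
  rw [Measure.finset_sum_apply, withDensity_apply _ hA,
    lintegral_finset_sum _ fun k _ => (hg k).const_mul _]
  refine Finset.sum_congr rfl fun k _ => ?_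
  rw [Measure.smul_apply, withDensity_apply _ hA, lintegral_const_mul _ (hg k)]
  rfl

lemma diagGaussian_eq_withDensity {d : ℕ} (m : Fin d → ℝ) (v : Fin d → ℝ≥0)
    (hv : ∀ j, 0 < v j) :
    diagGaussian m v
      = volume.withDensity fun y => ∏ j, gaussianPDF (m j) (v j) (y j) := by
  haveI : ∀ j, SigmaFinite (volume.withDensity (gaussianPDF (m j) (v j))) := fun j => by
    rw [← gaussianReal_of_var_ne_zero _ (hv j).ne']; infer_instance
  have h : (fun j => gaussianReal (m j) (v j))
      = fun j => volume.withDensity (gaussianPDF (m j) (v j)) :=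
    funext fun j => gaussianReal_of_var_ne_zero _ (hv j).ne'
  rw [diagGaussian, h, pi_withDensity_eq _ _ (fun j => measurable_gaussianPDF _ _),
    ← volume_pi]

/-- Each Gaussian pdf, as a function of a coordinate of `ℝ^d`, is analytic. -/
lemma analyticAt_gaussianPDFReal_comp {d : ℕ} (μ : ℝ) (v : ℝ≥0) (hv : 0 < v)
    (j : Fin d) (y : Fin d → ℝ) :
    AnalyticAt ℝ (fun z : Fin d → ℝ => gaussianPDFReal μ v (z j)) y := by
  have hproj : AnalyticAt ℝ (fun z : Fin d → ℝ => z j) y :=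
    (ContinuousLinearMap.proj j : (Fin d → ℝ) →L[ℝ] ℝ).analyticAt y
  have hq : AnalyticAt ℝ (fun z : Fin d → ℝ => -(z j - μ) ^ 2 / (2 * (v : ℝ))) y := by
    have h2v : (2 * (v : ℝ)) ≠ 0 := by positivity
    exact (((hproj.sub analyticAt_const).pow 2).neg).div analyticAt_const (by simpa using h2v)
  have : AnalyticAt ℝ
      (fun z : Fin d → ℝ => (Real.sqrt (2 * Real.pi * v))⁻¹
        * Real.exp (-(z j - μ) ^ 2 / (2 * (v : ℝ)))) y :=
    analyticAt_const.mul hq.rexp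
  exact this.congr (Filter.Eventually.of_forall fun z => rfl)

/-- Local identifiability of finite mixtures of non-degenerate diagonal Gaussians:
if two such mixtures agree on some open ball, they agree everywhere. -/
theorem gaussianMixture_eq_of_restrict_ball_eq {d : ℕ} (hd : 0 < d)
    {K K' : ℕ}
    (π : Fin K → ℝ≥0) (hπ : ∑ k, π k = 1)
    (m : Fin K → Fin d → ℝ) (v : Fin K → Fin d → ℝ≥0)
    (hv : ∀ k j, 0 < v k j)
    (π' : Fin K' → ℝ≥0) (hπ' : ∑ k, π' k = 1)
    (m' : Fin K' → Fin d → ℝ) (v' : Fin K' → Fin d → ℝ≥0)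
    (hv' : ∀ k j, 0 < v' k j)
    (x : Fin d → ℝ) (δ : ℝ) (hδ : 0 < δ)
    (hloc : (∑ k, (π k) • diagGaussian (m k) (v k)).restrict (Metric.ball x δ)
      = (∑ k, (π' k) • diagGaussian (m' k) (v' k)).restrict (Metric.ball x δ)) :
    (∑ k, (π k) • diagGaussian (m k) (v k))
      = ∑ k, (π' k) • diagGaussian (m' k) (v' k) := by
  classical
  -- densities
  set f : (Fin d → ℝ) → ENNReal :=
    fun y => ∑ k, (π k : ENNReal) * ∏ j, gaussianPDF (m k j) (v k j) (y j) with hf_def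
  set g : (Fin d → ℝ) → ENNReal :=
    fun y => ∑ k, (π' k : ENNReal) * ∏ j, gaussianPDF (m' k j) (v' k j) (y j) with hg_def
  set F : (Fin d → ℝ) → ℝ :=
    fun y => ∑ k, (π k : ℝ) * ∏ j, gaussianPDFReal (m k j) (v k j) (y j) with hF_def
  set G : (Fin d → ℝ) → ℝ :=
    fun y => ∑ k, (π' k : ℝ) * ∏ j, gaussianPDFReal (m' k j) (v' k j) (y j) with hG_def
  have hFnn : ∀ y, 0 ≤ F y := fun y =>
    Finset.sum_nonneg fun k _ => mul_nonneg (π k).coe_nonneg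
      (Finset.prod_nonneg fun j _ => gaussianPDFReal_nonneg _ _ _)
  have hGnn : ∀ y, 0 ≤ G y := fun y =>
    Finset.sum_nonneg fun k _ => mul_nonneg (π' k).coe_nonneg
      (Finset.prod_nonneg fun j _ => gaussianPDFReal_nonneg _ _ _)
  have hfF : ∀ y, f y = ENNReal.ofReal (F y) := by
    intro y
    rw [hF_def]
    rw [ENNReal.ofReal_sum_of_nonneg fun k _ => mul_nonneg (π k).coe_nonneg
      (Finset.prod_nonneg fun j _ => gaussianPDFReal_nonneg _ _ _)]
    refine Finset.sum_congr rfl fun k _ => ?_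
    rw [ENNReal.ofReal_mul (π k).coe_nonneg,
      ENNReal.ofReal_prod_of_nonneg fun j _ => gaussianPDFReal_nonneg _ _ _,
      ENNReal.ofReal_coe_nnreal]
    rfl
  have hgG : ∀ y, g y = ENNReal.ofReal (G y) := by
    intro y
    rw [hG_def]
    rw [ENNReal.ofReal_sum_of_nonneg fun k _ => mul_nonneg (π' k).coe_nonneg
      (Finset.prod_nonneg fun j _ => gaussianPDFReal_nonneg _ _ _)]
    refine Finset.sum_congr rfl fun k _ => ?_
    rw [ENNReal.ofReal_mul (π' k).coe_nonneg,
      ENNReal.ofReal_prod_of_nonneg fun j _ => gaussianPDFReal_nonneg _ _ _,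
      ENNReal.ofReal_coe_nnreal]
    rfl
  have hfmeas : Measurable f :=
    Finset.measurable_sum _ fun k _ => Measurable.const_mul
      (Finset.measurable_prod _ fun j _ =>
        (measurable_gaussianPDF _ _).comp (measurable_pi_apply j)) _
  have hgmeas : Measurable g :=
    Finset.measurable_sum _ fun k _ => Measurable.const_mul
      (Finset.measurable_prod _ fun j _ =>
        (measurable_gaussianPDF _ _).comp (measurable_pi_apply j)) _
  -- mixtures as withDensity
  have hmix : (∑ k, (π k) • diagGaussian (m k) (v k)) = volume.withDensity f := by
    have h1 : ∀ k, diagGaussian (m k) (v k)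
        = volume.withDensity fun y => ∏ j, gaussianPDF (m k j) (v k j) (y j) :=
      fun k => diagGaussian_eq_withDensity _ _ (hv k)
    calc (∑ k, (π k) • diagGaussian (m k) (v k))
        = ∑ k, (π k) • volume.withDensity
            (fun y => ∏ j, gaussianPDF (m k j) (v k j) (y j)) := by
          refine Finset.sum_congr rfl fun k _ => ?_; rw [h1 k]
      _ = volume.withDensity f :=
          mixture_withDensity _ _ _ fun k => Finset.measurable_prod _ fun j _ =>
            (measurable_gaussianPDF _ _).comp (measurable_pi_apply j)
  have hmix' : (∑ k, (π' k) • diagGaussian (m' k) (v' k)) = volume.withDensity g := by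
    have h1 : ∀ k, diagGaussian (m' k) (v' k)
        = volume.withDensity fun y => ∏ j, gaussianPDF (m' k j) (v' k j) (y j) :=
      fun k => diagGaussian_eq_withDensity _ _ (hv' k)
    calc (∑ k, (π' k) • diagGaussian (m' k) (v' k))
        = ∑ k, (π' k) • volume.withDensity
            (fun y => ∏ j, gaussianPDF (m' k j) (v' k j) (y j)) := by
          refine Finset.sum_congr rfl fun k _ => ?_; rw [h1 k]
      _ = volume.withDensity g :=
          mixture_withDensity _ _ _ fun k => Finset.measurable_prod _ fun j _ =>
            (measurable_gaussianPDF _ _).comp (measurable_pi_apply j)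
  -- densities agree a.e. on the ball
  rw [hmix, hmix'] at hloc ⊢
  have hball : MeasurableSet (Metric.ball x δ) := measurableSet_ball
  rw [restrict_withDensity hball, restrict_withDensity hball] at hloc
  have hae : f =ᵐ[volume.restrict (Metric.ball x δ)] g :=
    (withDensity_eq_iff_of_sigmaFinite hfmeas.aemeasurable hgmeas.aemeasurable).mp hloc
  have haeFG : F =ᵐ[volume.restrict (Metric.ball x δ)] G := by
    filter_upwards [hae] with y hy
    rw [hfF y, hgG y] at hy
    exact (ENNReal.ofReal_eq_ofReal_iff (hFnn y) (hGnn y)).mp hy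
  -- analyticity
  have hFa : ∀ y, AnalyticAt ℝ F y := fun y =>
    Finset.analyticAt_fun_sum _ fun k _ => analyticAt_const.mul
      (Finset.analyticAt_fun_prod _ fun j _ =>
        analyticAt_gaussianPDFReal_comp _ _ (hv k j) j y)
  have hGa : ∀ y, AnalyticAt ℝ G y := fun y =>
    Finset.analyticAt_fun_sum _ fun k _ => analyticAt_const.mul
      (Finset.analyticAt_fun_prod _ fun j _ =>
        analyticAt_gaussianPDFReal_comp _ _ (hv' k j) j y)
  have hFc : Continuous F := continuous_iff_continuousAt.mpr fun y => (hFa y).continuousAt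
  have hGc : Continuous G := continuous_iff_continuousAt.mpr fun y => (hGa y).continuousAt
  -- equality on the ball, then everywhere by analytic continuation
  have heqOn : Set.EqOn F G (Metric.ball x δ) :=
    Measure.eqOn_open_of_ae_eq haeFG Metric.isOpen_ball hFc.continuousOn hGc.continuousOn
  have hev : F =ᶠ[nhds x] G :=
    Filter.eventuallyEq_of_mem (Metric.ball_mem_nhds x hδ) heqOn
  have hFG : F = G :=
    AnalyticOnNhd.eq_of_eventuallyEq (fun y _ => hFa y) (fun y _ => hGa y) hev
  have hfg : f = g := funext fun y => by rw [hfF y, hgG y, hFG]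
  rw [hfg]
end

section
/- (Affine-equivalence step.) Let m ≤ n be positive integers. Let f(x) = A x + a and g(x) = B x + b be affine maps from ℝ^m to ℝ^n with A, B : ℝ^m → ℝ^n injective linear maps and a, b ∈ ℝ^n. Let μ and ν be finite mixtures of diagonal Gaussians on ℝ^m, each with weights summing to 1 and all variance entries strictly positive. If the pushforward measures satisfy f_*μ = g_*ν, then the affine images coincide, f(ℝ^m) = g(ℝ^m), and there exists an invertible affine map h : ℝ^m → ℝ^m such that f = g ∘ h and ν = h_*μ; that is, the two latent mixtures are related by an invertible affine transformation. -/
open MeasureTheory ProbabilityTheory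
open scoped NNReal ENNReal
open Topology

lemma diagGaussian_isOpenPosMeasure {d : ℕ} (m : Fin d → ℝ) (v : Fin d → ℝ≥0)
    (hv : ∀ j, 0 < v j) : (diagGaussian m v).IsOpenPosMeasure := by
  haveI : ∀ j, (gaussianReal (m j) (v j)).IsOpenPosMeasure := fun j =>
    (gaussianReal_absolutelyContinuous' (m j) (hv j).ne').isOpenPosMeasure
  unfold diagGaussian
  infer_instance

lemma mixture_isOpenPosMeasure {d K : ℕ} (π : Fin K → ℝ≥0) (hπ : ∑ k, π k = 1)
    (ms : Fin K → Fin d → ℝ) (vs : Fin K → Fin d → ℝ≥0) (hvs : ∀ k j, 0 < vs k j) :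
    (∑ k, (π k) • diagGaussian (ms k) (vs k)).IsOpenPosMeasure := by
  obtain ⟨k, hk⟩ : ∃ k, π k ≠ 0 := by
    by_contra h
    push_neg at h
    simp [h] at hπ
  constructor
  intro U hU hne
  haveI := diagGaussian_isOpenPosMeasure (ms k) (vs k) (hvs k)
  have hpos : (0 : ℝ≥0∞) < diagGaussian (ms k) (vs k) U := hU.measure_pos _ hne
  have hle : (π k) • diagGaussian (ms k) (vs k) U ≤
      (∑ k, (π k) • diagGaussian (ms k) (vs k)) U := by
    rw [Measure.finset_sum_apply]
    have := Finset.single_le_sum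
      (f := fun j => ((π j) • diagGaussian (ms j) (vs j)) U)
      (fun j _ => zero_le) (Finset.mem_univ k)
    simpa using this
  refine ne_of_gt (lt_of_lt_of_le ?_ hle)
  rw [ENNReal.smul_def, smul_eq_mul]
  exact ENNReal.mul_pos (by exact_mod_cast hk) hpos.ne'

/-- Affine-equivalence step: if two injective affine maps `f x = A x + a` and
`g x = B x + b` from `ℝ^m` to `ℝ^n` push two non-degenerate diagonal Gaussian mixtures
to the same measure, then their images coincide and the two latent mixtures are related
by an invertible affine map `h x = C x + c` with `f = g ∘ h` and `ν = h_* μ`. -/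
theorem affine_equivalence_step {m n : ℕ} (hm : 0 < m) (hn : 0 < n) (hmn : m ≤ n)
    (A B : (Fin m → ℝ) →ₗ[ℝ] (Fin n → ℝ))
    (hA : Function.Injective A) (hB : Function.Injective B)
    (a b : Fin n → ℝ)
    {K K' : ℕ}
    (π : Fin K → ℝ≥0) (hπ : ∑ k, π k = 1)
    (ms : Fin K → Fin m → ℝ) (vs : Fin K → Fin m → ℝ≥0) (hvs : ∀ k j, 0 < vs k j)
    (π' : Fin K' → ℝ≥0) (hπ' : ∑ k, π' k = 1)
    (ms' : Fin K' → Fin m → ℝ) (vs' : Fin K' → Fin m → ℝ≥0) (hvs' : ∀ k j, 0 < vs' k j)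
    (μ ν : Measure (Fin m → ℝ))
    (hμ : μ = ∑ k, (π k) • diagGaussian (ms k) (vs k))
    (hν : ν = ∑ k, (π' k) • diagGaussian (ms' k) (vs' k))
    (hpush : Measure.map (fun x => A x + a) μ = Measure.map (fun x => B x + b) ν) :
    Set.range (fun x => A x + a) = Set.range (fun x => B x + b)
    ∧ ∃ (C : (Fin m → ℝ) ≃ₗ[ℝ] (Fin m → ℝ)) (c : Fin m → ℝ),
        (∀ x, A x + a = B (C x + c) + b)
        ∧ ν = Measure.map (fun x => C x + c) μ := by
  classical
  haveI hμo : μ.IsOpenPosMeasure := hμ ▸ mixture_isOpenPosMeasure π hπ ms vs hvs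
  haveI hνo : ν.IsOpenPosMeasure := hν ▸ mixture_isOpenPosMeasure π' hπ' ms' vs' hvs'
  set f : (Fin m → ℝ) → (Fin n → ℝ) := fun x => A x + a with hf
  set g : (Fin m → ℝ) → (Fin n → ℝ) := fun x => B x + b with hg
  have hAce : IsClosedEmbedding (A : (Fin m → ℝ) → (Fin n → ℝ)) :=
    LinearMap.isClosedEmbedding_of_injective (LinearMap.ker_eq_bot.mpr hA)
  have hBce : IsClosedEmbedding (B : (Fin m → ℝ) → (Fin n → ℝ)) :=
    LinearMap.isClosedEmbedding_of_injective (LinearMap.ker_eq_bot.mpr hB)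
  have hfce : IsClosedEmbedding f :=
    (Homeomorph.addRight a).isClosedEmbedding.comp hAce
  have hgce : IsClosedEmbedding g :=
    (Homeomorph.addRight b).isClosedEmbedding.comp hBce
  -- key: range f ⊆ range g (and symmetrically)
  have key : ∀ (f' g' : (Fin m → ℝ) → (Fin n → ℝ)) (μ' ν' : Measure (Fin m → ℝ)),
      μ'.IsOpenPosMeasure → IsClosedEmbedding f' → IsClosedEmbedding g' →
      Measure.map f' μ' = Measure.map g' ν' → Set.range f' ⊆ Set.range g' := by
    intro f' g' μ' ν' hμ' hfe hge hp y hy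
    obtain ⟨x, rfl⟩ := hy
    by_contra hyng
    have hUopen : IsOpen (Set.range g')ᶜ := hge.isClosed_range.isOpen_compl
    have h0 : Measure.map g' ν' (Set.range g')ᶜ = 0 := by
      rw [Measure.map_apply hge.continuous.measurable hUopen.measurableSet]
      simp
    have h1 : Measure.map f' μ' (Set.range g')ᶜ ≠ 0 := by
      rw [Measure.map_apply hfe.continuous.measurable hUopen.measurableSet]
      refine (hUopen.preimage hfe.continuous).measure_ne_zero μ' ⟨x, hyng⟩
    exact h1 (hp ▸ h0)
  have hrange : Set.range f = Set.range g :=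
    Set.Subset.antisymm (key f g μ ν hμo hfce hgce hpush)
      (key g f ν μ hνo hgce hfce hpush.symm)
  -- a - b ∈ range B and b - a ∈ range A
  have hab : a - b ∈ LinearMap.range B := by
    have : a ∈ Set.range g := hrange ▸ ⟨0, by simp [hf]⟩
    obtain ⟨y, hy⟩ := this
    exact ⟨y, by simp [hg] at hy; linear_combination (norm := module) hy⟩
  have hba : b - a ∈ LinearMap.range A := by
    have : b ∈ Set.range f := hrange.symm ▸ ⟨0, by simp [hg]⟩
    obtain ⟨y, hy⟩ := this
    exact ⟨y, by simp [hf] at hy; linear_combination (norm := module) hy⟩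
  -- ranges of A and B coincide
  have hrAB : LinearMap.range A = LinearMap.range B := by
    ext z
    constructor
    · rintro ⟨x, rfl⟩
      have : f x ∈ Set.range g := hrange ▸ ⟨x, rfl⟩
      obtain ⟨y, hy⟩ := this
      obtain ⟨y₀, hy₀⟩ := hab
      refine ⟨y - y₀, ?_⟩
      simp only [hg, hf] at hy
      rw [map_sub, hy₀]
      linear_combination (norm := module) hy
    · rintro ⟨x, rfl⟩
      have : g x ∈ Set.range f := hrange.symm ▸ ⟨x, rfl⟩
      obtain ⟨y, hy⟩ := this
      obtain ⟨y₀, hy₀⟩ := hba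
      refine ⟨y - y₀, ?_⟩
      simp only [hg, hf] at hy
      rw [map_sub, hy₀]
      linear_combination (norm := module) hy
  -- build C and c
  let eA : (Fin m → ℝ) ≃ₗ[ℝ] LinearMap.range A := LinearEquiv.ofInjective A hA
  let eB : (Fin m → ℝ) ≃ₗ[ℝ] LinearMap.range B := LinearEquiv.ofInjective B hB
  let eAB : LinearMap.range A ≃ₗ[ℝ] LinearMap.range B := LinearEquiv.ofEq _ _ hrAB
  let C : (Fin m → ℝ) ≃ₗ[ℝ] (Fin m → ℝ) := eA ≪≫ₗ eAB ≪≫ₗ eB.symm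
  let c : Fin m → ℝ := eB.symm ⟨a - b, hab⟩
  have hBeBsymm : ∀ w : LinearMap.range B, B (eB.symm w) = (w : Fin n → ℝ) := fun w =>
    LinearEquiv.ofInjective_symm_apply (f := B) (h := hB) w
  have hBC : ∀ x, B (C x) = A x := by
    intro x
    show B (eB.symm (eAB (eA x))) = A x
    rw [hBeBsymm (eAB (eA x))]
    simp [eAB, eA, LinearEquiv.coe_ofEq_apply]
  have hBc : B c = a - b := hBeBsymm ⟨a - b, hab⟩
  have hkey : ∀ x, A x + a = B (C x + c) + b := by
    intro x
    rw [map_add, hBC, hBc]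
    abel
  refine ⟨hrange, C, c, hkey, ?_⟩
  -- pushforward identity
  have hCcont : Continuous (fun x : Fin m → ℝ => C x + c) :=
    (C.toLinearMap.continuous_of_finiteDimensional).add continuous_const
  have hgemb : MeasurableEmbedding g := hgce.measurableEmbedding
  have hcomp : Measure.map g (Measure.map (fun x => C x + c) μ) = Measure.map g ν := by
    rw [Measure.map_map hgce.continuous.measurable hCcont.measurable]
    have hgc : (g ∘ fun x => C x + c) = f := funext fun x => (hkey x).symm
    rw [hgc, ← hpush]
  ext s hs
  have h1 := congrArg (fun ρ : Measure (Fin n → ℝ) => ρ (g '' s)) hcomp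
  rw [Measure.map_apply hgce.continuous.measurable (hgemb.measurableSet_image' hs),
    Measure.map_apply hgce.continuous.measurable (hgemb.measurableSet_image' hs),
    hgemb.injective.preimage_image] at h1
  exact h1.symm
end
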